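/- arXiv:2310.16022 — 2 statements merged into one kernel-verified Lean document; each statement's English description precedes it below -/
import Mathlib

section
/- An ultimately periodic word w belongs to L if and only if its natural color is even. -/
open scoped Classical

/-- Concatenation of a finite word with an infinite word. -/
def wcat {A : Type} (u : List A) (w : ℕ → A) : ℕ → A :=
  fun n => if h : n < u.length then u.get ⟨n, h⟩ else w (n - u.length)

/-- The infinite periodic word `v^ω`. -/
def wpow {A : Type} [Inhabited A] (v : List A) : ℕ → A :=
  fun n => v.getD (n % v.length) default

/-- The ultimately periodic word `u · v^ω`. -/
def upw {A : Type} [Inhabited A] (u v : List A) : ℕ → A := wcat u (wpow v)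

/-- The finite word `v^i`. -/
def wrep {A : Type} (v : List A) (i : ℕ) : List A := (List.replicate i v).flatten

/-- The right congruence `x ∼_L y`. -/
def simL {A : Type} (L : Set (ℕ → A)) (x y : List A) : Prop :=
  ∀ w : ℕ → A, wcat x w ∈ L ↔ wcat y w ∈ L

/-- `w` is `u`-invariant: `u ∼_L u·w`. -/
def UInv {A : Type} (L : Set (ℕ → A)) (u w : List A) : Prop := simL L u (u ++ w)

/-- `v` is relevant to `u`. -/
def URel {A : Type} (L : Set (ℕ → A)) (u v : List A) : Prop :=
  ∃ z : List A, UInv L u (v ++ z)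

/-- `v` has natural color at most `c` wrt `u`. -/
def ColorAtMost {A : Type} [Inhabited A] (L : Set (ℕ → A)) (u : List A) :
    ℕ → List A → Prop
  | c, v => ∀ z : List A, UInv L u (v ++ z) →
      ((upw u (v ++ z) ∈ L ↔ Even c) ∨
        ∃ i : ℕ, 0 < i ∧ ∃ c' : Fin c, ColorAtMost L u c' (wrep (v ++ z) i))
  termination_by c => c
  decreasing_by exact c'.isLt

/-- The natural color of the finite word `v` wrt `u`: `⊥` (i.e. `-∞`) if `v` is
irrelevant to `u`, and otherwise the minimal `c ≥ 0` as in the paper. -/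
noncomputable def ncol {A : Type} [Inhabited A] (L : Set (ℕ → A)) (u v : List A) :
    WithBot ℕ :=
  if URel L u v then ((sInf {c : ℕ | ColorAtMost L u c v} : ℕ) : WithBot ℕ) else ⊥

/-- `v` is stable wrt `u`. -/
def Stable {A : Type} [Inhabited A] (L : Set (ℕ → A)) (u v : List A) : Prop :=
  ∀ i : ℕ, 0 < i → ncol L u v = ncol L u (wrep v i)

/-- `v` is `u`-reliable. -/
def UReliable {A : Type} [Inhabited A] (L : Set (ℕ → A)) (u v : List A) : Prop :=
  UInv L u v ∧ Stable L u v

/-- The natural color of an ultimately periodic infinite word. -/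
noncomputable def icol {A : Type} [Inhabited A] (L : Set (ℕ → A)) (w : ℕ → A) : ℕ :=
  sInf {c : ℕ | ∃ u v : List A, v ≠ [] ∧ w = upw u v ∧ UInv L u v ∧
    ncol L u v = (c : WithBot ℕ)}

/-- The set of states visited infinitely often by a run. -/
def infSet {Q : Type} (r : ℕ → Q) : Set Q := {q | ∀ n : ℕ, ∃ m : ℕ, n ≤ m ∧ r m = q}

/-- The run of a complete deterministic automaton on an infinite word. -/
def runOf {A Q : Type} (δ : Q → A → Q) (q0 : Q) (w : ℕ → A) : ℕ → Q
  | 0 => q0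
  | n + 1 => δ (runOf δ q0 w n) (w n)

/-- `L` is ω-regular: recognized by some deterministic Muller automaton. -/
def OmegaRegular {A : Type} (L : Set (ℕ → A)) : Prop :=
  ∃ (Q : Type) (_ : Fintype Q) (q0 : Q) (δ : Q → A → Q) (α : Set (Set Q)),
    ∀ w : ℕ → A, w ∈ L ↔ infSet (runOf δ q0 w) ∈ α


/-!
Take a decomposition `w = u · v^ω` with `v` nonempty and `u`-invariant whose color `m` is the
natural color of `w`. Each `u · (v^i)^ω` is again such a decomposition, so no power of `v` has
color below `m`, and the clause defining "color at most `m`" at the empty extension leaves only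
the parity alternative: `w ∈ L ↔ Even m`.

It remains to see that every nonempty `u`-invariant word `x` has some color. Fix a deterministic
Muller automaton for `L` and rank `x` by `2 * ((|Q| + 1) * |I x| + ρ x) + [u · x^ω ∉ L]`, where
`I x` is the set of visiting profiles of the extensions of `x` and `ρ x` is the least size of a
loop of `x^ω` started at a state reached by a `u`-invariant word. If `u · (x z)^ω` and
`u · x^ω` differ on `L`, either the profile ideal of some power of `x z` is strictly smaller,
or no power of `x z` visits a state that `x` does not visit, and then a loop of `(x z)^ω` sits
strictly inside a loop of `x^ω`, so `ρ` drops. Either way some power of `x z` has smaller rank.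
-/

section Words
variable {A : Type}

theorem wcat_append (x y : List A) (w : ℕ → A) :
    wcat (x ++ y) w = wcat x (wcat y w) := by
  funext n
  simp only [wcat, List.length_append]
  rcases lt_or_ge n x.length with h | h
  · rw [dif_pos (by omega : n < x.length + y.length), dif_pos h]
    simp [h]
  · rcases lt_or_ge n (x.length + y.length) with h2 | h2
    · rw [dif_pos h2, dif_neg (by omega), dif_pos (by omega : n - x.length < y.length)]
      simp only [List.get_eq_getElem]
      rw [List.getElem_append_right (by omega)]
    · rw [dif_neg (by omega), dif_neg (by omega), dif_neg (by omega)]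
      congr 1
      omega

theorem eq_of_wcat_eq_self {y : List A} (hy : y ≠ []) {W W' : ℕ → A}
    (hW : wcat y W = W) (hW' : wcat y W' = W') : W = W' := by
  funext n
  induction n using Nat.strong_induction_on with
  | _ n ih =>
    rw [← hW, ← hW']
    unfold wcat
    split_ifs
    · rfl
    · exact ih _ (by have := List.length_pos_iff.2 hy; omega)

theorem wrep_succ (v : List A) (i : ℕ) : wrep v (i + 1) = v ++ wrep v i := by
  simp [wrep, List.replicate_succ]

theorem wrep_one (v : List A) : wrep v 1 = v := by
  simp [wrep]

theorem wrep_add (v : List A) (i j : ℕ) : wrep v (i + j) = wrep v i ++ wrep v j := by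
  simp only [wrep, List.replicate_add, List.flatten_append]

theorem length_wrep (v : List A) (i : ℕ) : (wrep v i).length = i * v.length := by
  simp [wrep]

theorem wrep_ne_nil {v : List A} (hv : v ≠ []) {i : ℕ} (hi : 0 < i) : wrep v i ≠ [] := by
  intro h
  exact hv (List.flatten_eq_nil_iff.1 h v (List.mem_replicate.2 ⟨hi.ne', rfl⟩))

theorem exists_wrep_eq_append (v : List A) {i : ℕ} (hi : 0 < i) : ∃ t, wrep v i = v ++ t := by
  obtain ⟨k, rfl⟩ : ∃ k, i = k + 1 := ⟨i - 1, by omega⟩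
  exact ⟨wrep v k, wrep_succ v k⟩

variable [Inhabited A]

theorem wcat_wpow (v : List A) : wcat v (wpow v) = wpow v := by
  funext n
  simp only [wcat, wpow]
  rcases lt_or_ge n v.length with h | h
  · rw [dif_pos h, Nat.mod_eq_of_lt h]
    simp [List.getD, List.getElem?_eq_getElem h]
  · rw [dif_neg (by omega), Nat.mod_eq_sub_mod h]

theorem wcat_wrep_wpow (v : List A) (i : ℕ) :
    wcat (wrep v i) (wpow v) = wpow v := by
  induction i with
  | zero => funext n; simp [wrep, wcat]
  | succ k ih => rw [wrep_succ, wcat_append, ih, wcat_wpow]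

theorem wpow_wrep {v : List A} (hv : v ≠ []) {i : ℕ} (hi : 0 < i) :
    wpow (wrep v i) = wpow v :=
  eq_of_wcat_eq_self (wrep_ne_nil hv hi) (wcat_wpow _) (wcat_wrep_wpow v i)

theorem upw_wrep (u : List A) {v : List A} (hv : v ≠ []) {i : ℕ} (hi : 0 < i) :
    upw u (wrep v i) = upw u v := by
  rw [upw, upw, wpow_wrep hv hi]

end Words

section Invariance
variable {A : Type} {L : Set (ℕ → A)}

theorem uInv_nil (u : List A) : UInv L u [] := by
  simp [UInv, simL]

theorem UInv.append {u x y : List A} (hx : UInv L u x) (hy : UInv L u y) :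
    UInv L u (x ++ y) := fun w =>
  calc wcat u w ∈ L ↔ wcat u (wcat y w) ∈ L := by rw [← wcat_append]; exact hy w
    _ ↔ wcat (u ++ x) (wcat y w) ∈ L := hx (wcat y w)
    _ ↔ wcat (u ++ (x ++ y)) w ∈ L := by rw [← List.append_assoc, wcat_append (u ++ x)]

theorem UInv.wrep {u v : List A} (hv : UInv L u v) (i : ℕ) : UInv L u (wrep v i) := by
  induction i with
  | zero => exact uInv_nil u
  | succ k ih => rw [wrep_succ]; exact hv.append ih

end Invariance

section Colors
variable {A : Type} [Inhabited A] {L : Set (ℕ → A)}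

theorem colorAtMost_of_ranking {u : List A} (f : List A → ℕ)
    (hpar : ∀ x, UInv L u x → x ≠ [] → (Even (f x) ↔ upw u x ∈ L))
    (hdesc : ∀ x z, UInv L u x → x ≠ [] → ¬(upw u (x ++ z) ∈ L ↔ upw u x ∈ L) →
      ∃ i, 0 < i ∧ f (wrep (x ++ z) i) < f x) :
    ∀ x, UInv L u x → x ≠ [] → ColorAtMost L u (f x) x := by
  intro x
  induction hn : f x using Nat.strong_induction_on generalizing x with
  | _ n ih =>
    intro hx hxne
    rw [ColorAtMost]
    intro z hxz
    by_cases hflip : upw u (x ++ z) ∈ L ↔ upw u x ∈ L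
    · exact Or.inl (hflip.trans (hn ▸ hpar x hx hxne).symm)
    · obtain ⟨i, hi, hlt⟩ := hdesc x z hx hxne hflip
      have hxzne : x ++ z ≠ [] := by simp [hxne]
      exact Or.inr ⟨i, hi, ⟨_, hn ▸ hlt⟩,
        ih _ (hn ▸ hlt) _ rfl (hxz.wrep i) (wrep_ne_nil hxzne hi)⟩

theorem ncol_of_uInv {u v : List A} (hv : UInv L u v) :
    ncol L u v = ((sInf {c | ColorAtMost L u c v} : ℕ) : WithBot ℕ) :=
  if_pos ⟨[], by rwa [List.append_nil]⟩

theorem icol_upw_le {u v : List A} (hv : v ≠ []) (hinv : UInv L u v) :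
    icol L (upw u v) ≤ sInf {c | ColorAtMost L u c v} :=
  Nat.sInf_le ⟨u, v, hv, rfl, hinv, ncol_of_uInv hinv⟩

theorem exists_icol_eq {w : ℕ → A} (hdec : ∃ u v, v ≠ [] ∧ w = upw u v ∧ UInv L u v) :
    ∃ u v, v ≠ [] ∧ w = upw u v ∧ UInv L u v ∧
      icol L w = sInf {c | ColorAtMost L u c v} := by
  obtain ⟨u, v, hv, hw, hinv⟩ := hdec
  have hmin : icol L w ∈ {c : ℕ | ∃ u v : List A, v ≠ [] ∧ w = upw u v ∧ UInv L u v ∧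
      ncol L u v = (c : WithBot ℕ)} :=
    Nat.sInf_mem ⟨_, u, v, hv, hw, hinv, ncol_of_uInv hinv⟩
  obtain ⟨u', v', hv', hw', hinv', hcol⟩ := hmin
  rw [ncol_of_uInv hinv'] at hcol
  exact ⟨u', v', hv', hw', hinv', (WithBot.coe_inj.1 hcol).symm⟩

theorem mem_iff_even_icol_of_colored
    (hcol : ∀ u x : List A, UInv L u x → x ≠ [] → ∃ c, ColorAtMost L u c x)
    {w : ℕ → A} (hdec : ∃ u v, v ≠ [] ∧ w = upw u v ∧ UInv L u v) :
    w ∈ L ↔ Even (icol L w) := by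
  obtain ⟨u, v, hv, rfl, hinv, hm⟩ := exists_icol_eq hdec
  have hcv : ColorAtMost L u (icol L (upw u v)) v := hm ▸ Nat.sInf_mem (hcol u v hinv hv)
  rw [ColorAtMost] at hcv
  rcases hcv [] (by rwa [List.append_nil]) with hpar | ⟨i, hi, c, hc⟩
  · rwa [List.append_nil] at hpar
  · rw [List.append_nil] at hc
    have hle := icol_upw_le (L := L) (u := u) (wrep_ne_nil hv hi) (hinv.wrep i)
    rw [upw_wrep u hv hi] at hle
    exact absurd (hle.trans (Nat.sInf_le hc)) (not_le.2 c.isLt)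

end Colors

section Runs
variable {A Q : Type} (δ : Q → A → Q)

theorem runOf_add (q : Q) (w : ℕ → A) (k n : ℕ) :
    runOf δ q w (k + n) = runOf δ (runOf δ q w k) (fun i => w (k + i)) n := by
  induction n with
  | zero => rfl
  | succ n ih => show δ (runOf δ q w (k + n)) (w (k + n)) = _; rw [ih]; rfl

theorem runOf_wcat_of_le (q : Q) (pre : List A) (w : ℕ → A) {m : ℕ} (hm : m ≤ pre.length) :
    runOf δ q (wcat pre w) m = (pre.take m).foldl δ q := by
  induction m with
  | zero => rfl
  | succ m ih =>
    rw [runOf, ih (by omega), List.take_add_one, List.getElem?_eq_getElem (by omega),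
      Option.toList_some, List.foldl_append, List.foldl_cons, List.foldl_nil]
    simp only [wcat, dif_pos (show m < pre.length by omega), List.get_eq_getElem]

theorem runOf_wcat_length_add (q : Q) (pre : List A) (w : ℕ → A) (n : ℕ) :
    runOf δ q (wcat pre w) (pre.length + n) = runOf δ (pre.foldl δ q) w n := by
  rw [runOf_add, runOf_wcat_of_le δ q pre w le_rfl, List.take_length]
  congr
  funext i
  simp [wcat]

theorem infSet_shift {α : Type} (r : ℕ → α) (k : ℕ) :
    infSet (fun n => r (k + n)) = infSet r := by
  ext s
  constructor
  · intro h n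
    obtain ⟨m, hm, hms⟩ := h n
    exact ⟨k + m, by omega, hms⟩
  · intro h n
    obtain ⟨m, hm, hms⟩ := h (k + n)
    exact ⟨m - k, by omega, show r (k + (m - k)) = s by rwa [Nat.add_sub_cancel' (by omega)]⟩

theorem infSet_runOf_wcat (q : Q) (pre : List A) (w : ℕ → A) :
    infSet (runOf δ q (wcat pre w)) = infSet (runOf δ (pre.foldl δ q) w) := by
  rw [← infSet_shift (runOf δ q (wcat pre w)) pre.length]
  simp only [runOf_wcat_length_add]

theorem exists_foldl_wrep_cycle [Finite Q] (x : List A) (q : Q) :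
    ∃ a p, 0 < p ∧ (wrep x p).foldl δ ((wrep x a).foldl δ q) = (wrep x a).foldl δ q := by
  obtain ⟨a, b, hne, heq⟩ :=
    Finite.exists_ne_map_eq_of_infinite fun i => (wrep x i).foldl δ q
  wlog hab : a < b generalizing a b
  · exact this b a hne.symm heq.symm (by omega)
  exact ⟨a, b - a, by omega, by
    rw [← List.foldl_append, ← wrep_add, Nat.add_sub_cancel' hab.le, heq]⟩

end Runs

namespace Muller

section Loops
variable {A Q : Type} (δ : Q → A → Q)

def visited (w : List A) (q : Q) : Set Q :=
  (fun n => (w.take n).foldl δ q) '' Set.Iio w.length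

theorem visited_subset_append (w t : List A) (q : Q) :
    visited δ w q ⊆ visited δ (w ++ t) q := by
  rintro _ ⟨n, hn, rfl⟩
  refine ⟨n, ?_, ?_⟩
  · simp only [Set.mem_Iio, List.length_append] at hn ⊢
    omega
  · simp only [List.take_append_of_le_length (le_of_lt hn)]

theorem visited_subset_wrep (w : List A) {i : ℕ} (hi : 0 < i) (q : Q) :
    visited δ w q ⊆ visited δ (wrep w i) q := by
  obtain ⟨t, ht⟩ := exists_wrep_eq_append w hi
  rw [ht]
  exact visited_subset_append δ w t q

theorem runOf_wcat_mem_visited (q : Q) (pre : List A) (w : ℕ → A) {m : ℕ}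
    (hm : m < pre.length) : runOf δ q (wcat pre w) m ∈ visited δ pre q :=
  ⟨m, hm, (runOf_wcat_of_le δ q pre w hm.le).symm⟩

theorem foldl_wrep_of_foldl_eq {w : List A} {c : Q} (hc : w.foldl δ c = c) (j : ℕ) :
    (wrep w j).foldl δ c = c := by
  induction j with
  | zero => rfl
  | succ j ih => rw [wrep_succ, List.foldl_append, hc, ih]

variable [Inhabited A]

def loop (w : List A) (r : Q) : Set Q := infSet (runOf δ r (wpow w))

theorem loop_wrep {w : List A} (hw : w ≠ []) {i : ℕ} (hi : 0 < i) (r : Q) :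
    loop δ (wrep w i) r = loop δ w r := by
  rw [loop, loop, wpow_wrep hw hi]

theorem loop_foldl_wrep (w : List A) (a : ℕ) (r : Q) :
    loop δ w ((wrep w a).foldl δ r) = loop δ w r := by
  rw [loop, loop, ← infSet_runOf_wcat, wcat_wrep_wpow]

theorem visited_subset_loop {w : List A} (hw : w ≠ []) {c : Q} (hc : w.foldl δ c = c) :
    visited δ w c ⊆ loop δ w c := by
  have hperiodic : ∀ j n, runOf δ c (wpow w) (j * w.length + n) = runOf δ c (wpow w) n := by
    intro j n
    conv_lhs => rw [← wcat_wrep_wpow w j, ← length_wrep, runOf_wcat_length_add]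
    rw [foldl_wrep_of_foldl_eq δ hc]
  rintro _ ⟨n, hn, rfl⟩ N
  refine ⟨N * w.length + n, ?_, ?_⟩
  · have := List.length_pos_iff.2 hw
    nlinarith
  · show _ = (w.take n).foldl δ c
    rw [hperiodic, ← runOf_wcat_of_le δ c w _ (le_of_lt hn), wcat_wpow]

theorem loop_subset_of_visited_subset {w : List A} (hw : w ≠ []) {c : Q} {S : Set Q}
    (h : ∀ i, 0 < i → visited δ (wrep w i) c ⊆ S) : loop δ w c ⊆ S := by
  rintro s hs
  obtain ⟨m, -, rfl⟩ := hs 0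
  rw [← wcat_wrep_wpow w (m + 1)]
  refine h (m + 1) m.succ_pos (runOf_wcat_mem_visited δ c _ _ ?_)
  have := List.length_pos_iff.2 hw
  rw [length_wrep]
  nlinarith

end Loops

section MullerRanking
variable {A Q : Type} {L : Set (ℕ → A)} {δ : Q → A → Q} {q0 : Q} {α : Set (Set Q)}

def Recognizes (δ : Q → A → Q) (q0 : Q) (α : Set (Set Q)) (L : Set (ℕ → A)) : Prop :=
  ∀ w, w ∈ L ↔ infSet (runOf δ q0 w) ∈ α

theorem simL_of_foldl_eq (hL : Recognizes δ q0 α L) {x y : List A}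
    (h : x.foldl δ q0 = y.foldl δ q0) : simL L x y := fun w => by
  rw [hL, hL, infSet_runOf_wcat, infSet_runOf_wcat, h]

variable (L δ q0) in
def invReach (u : List A) : Set Q := {r | ∃ γ, UInv L u γ ∧ γ.foldl δ (u.foldl δ q0) = r}

theorem foldl_mem_invReach (u : List A) : u.foldl δ q0 ∈ invReach L δ q0 u :=
  ⟨[], uInv_nil u, rfl⟩

theorem foldl_mem_invReach_of_uInv {u γ : List A} (hγ : UInv L u γ) {r : Q}
    (hr : r ∈ invReach L δ q0 u) : γ.foldl δ r ∈ invReach L δ q0 u := by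
  obtain ⟨β, hβ, rfl⟩ := hr
  exact ⟨β ++ γ, hβ.append hγ, List.foldl_append ..⟩

variable (δ) in
def profileIdeal (w : List A) : Set (Q → Set Q) := Set.range fun t => visited δ (w ++ t)

theorem profileIdeal_wrep_subset (x z : List A) {i : ℕ} (hi : 0 < i) :
    profileIdeal δ (wrep (x ++ z) i) ⊆ profileIdeal δ x := by
  obtain ⟨t, ht⟩ := exists_wrep_eq_append (x ++ z) hi
  rintro _ ⟨s, rfl⟩
  exact ⟨z ++ t ++ s, by simp [ht]⟩

theorem visited_subset_of_mem_profileIdeal {x y : List A}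
    (h : visited δ x ∈ profileIdeal δ y) (q : Q) : visited δ y q ⊆ visited δ x q := by
  obtain ⟨t, ht⟩ := h
  rw [← ht]
  exact visited_subset_append δ y t q

variable [Inhabited A]

theorem loop_mem_iff (hL : Recognizes δ q0 α L) {u : List A} (x : List A) {r : Q}
    (hr : r ∈ invReach L δ q0 u) : loop δ x r ∈ α ↔ upw u x ∈ L := by
  obtain ⟨γ, hγ, rfl⟩ := hr
  rw [upw, hγ, hL, infSet_runOf_wcat, List.foldl_append]
  rfl

variable (L δ q0) in
noncomputable def loopRank (u x : List A) : ℕ :=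
  sInf ((fun r => (loop δ x r).ncard) '' invReach L δ q0 u)

theorem loopRank_le {u : List A} (x : List A) {r : Q} (hr : r ∈ invReach L δ q0 u) :
    loopRank L δ q0 u x ≤ (loop δ x r).ncard :=
  Nat.sInf_le ⟨r, hr, rfl⟩

theorem exists_loopRank_eq (u x : List A) :
    ∃ r ∈ invReach L δ q0 u, (loop δ x r).ncard = loopRank L δ q0 u x :=
  Nat.sInf_mem (Set.Nonempty.image _ ⟨_, foldl_mem_invReach u⟩)

variable (L δ q0) in
/-- Lexicographic in the size of the profile ideal and the loop rank, since
`loopRank ≤ Nat.card Q`. -/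
noncomputable def weight (u x : List A) : ℕ :=
  (Nat.card Q + 1) * (profileIdeal δ x).ncard + loopRank L δ q0 u x

variable (L δ q0) in
noncomputable def rank (u x : List A) : ℕ :=
  2 * weight L δ q0 u x + if upw u x ∈ L then 0 else 1

theorem even_rank_iff (u x : List A) : Even (rank L δ q0 u x) ↔ upw u x ∈ L := by
  unfold rank
  split_ifs with h <;> simp [h, parity_simps]

variable [Finite Q]

theorem loopRank_le_card (u x : List A) : loopRank L δ q0 u x ≤ Nat.card Q :=
  (loopRank_le x (foldl_mem_invReach u)).trans (Set.ncard_le_card _)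

/-- From a state `c` on the `x`-cycle of `r`, the loop of `(x ++ z)^ω` lies inside the loop
of `x^ω` from `r`, and strictly so because the two have different acceptance status. -/
theorem loopRank_append_lt (hL : Recognizes δ q0 α L) {u x z : List A}
    (hx : UInv L u x) (hxne : x ≠ [])
    (hvis : ∀ i, 0 < i → ∀ q, visited δ (wrep (x ++ z) i) q ⊆ visited δ x q)
    (hflip : ¬(upw u (x ++ z) ∈ L ↔ upw u x ∈ L)) :
    loopRank L δ q0 u (x ++ z) < loopRank L δ q0 u x := by
  obtain ⟨r, hr, hrank⟩ := exists_loopRank_eq (L := L) (q0 := q0) u x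
  obtain ⟨a, p, hp, hcycle⟩ := exists_foldl_wrep_cycle δ x r
  set c := (wrep x a).foldl δ r
  have hc : c ∈ invReach L δ q0 u := foldl_mem_invReach_of_uInv (hx.wrep a) hr
  have hsub : loop δ (x ++ z) c ⊆ loop δ x r :=
    calc loop δ (x ++ z) c ⊆ visited δ x c :=
          loop_subset_of_visited_subset δ (by simp [hxne]) fun i hi => hvis i hi c
      _ ⊆ visited δ (wrep x p) c := visited_subset_wrep δ x hp c
      _ ⊆ loop δ (wrep x p) c := visited_subset_loop δ (wrep_ne_nil hxne hp) hcycle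
      _ = loop δ x r := by rw [loop_wrep δ hxne hp, loop_foldl_wrep]
  have hne : loop δ (x ++ z) c ≠ loop δ x r := fun h =>
    hflip ((loop_mem_iff hL _ hc).symm.trans (h ▸ loop_mem_iff hL x hr))
  calc loopRank L δ q0 u (x ++ z) ≤ (loop δ (x ++ z) c).ncard := loopRank_le _ hc
    _ < (loop δ x r).ncard := Set.ncard_lt_ncard (hsub.ssubset_of_ne hne)
    _ = loopRank L δ q0 u x := hrank

theorem exists_weight_wrep_lt (hL : Recognizes δ q0 α L) {u x z : List A}
    (hx : UInv L u x) (hxne : x ≠ [])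
    (hflip : ¬(upw u (x ++ z) ∈ L ↔ upw u x ∈ L)) :
    ∃ i, 0 < i ∧ weight L δ q0 u (wrep (x ++ z) i) < weight L δ q0 u x := by
  by_cases hdrop : ∃ i, 0 < i ∧ visited δ x ∉ profileIdeal δ (wrep (x ++ z) i)
  · obtain ⟨i, hi, hnot⟩ := hdrop
    have hideal : (profileIdeal δ (wrep (x ++ z) i)).ncard + 1 ≤ (profileIdeal δ x).ncard :=
      Set.ncard_lt_ncard ⟨profileIdeal_wrep_subset x z hi,
        fun h => hnot (h ⟨[], by simp⟩)⟩
    have := Nat.mul_le_mul_left (Nat.card Q + 1) hideal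
    have := loopRank_le_card (L := L) (δ := δ) (q0 := q0) u (wrep (x ++ z) i)
    refine ⟨i, hi, ?_⟩
    rw [weight, weight]
    nlinarith
  · push Not at hdrop
    have hideal : (profileIdeal δ (x ++ z)).ncard ≤ (profileIdeal δ x).ncard := by
      simpa only [wrep_one] using
        Set.ncard_le_ncard (profileIdeal_wrep_subset (δ := δ) x z one_pos)
    have := Nat.mul_le_mul_left (Nat.card Q + 1) hideal
    have := loopRank_append_lt hL hx hxne
      (fun i hi => visited_subset_of_mem_profileIdeal (hdrop i hi)) hflip
    refine ⟨1, one_pos, ?_⟩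
    rw [wrep_one, weight, weight]
    omega

theorem exists_colorAtMost (hL : Recognizes δ q0 α L) {u x : List A}
    (hx : UInv L u x) (hxne : x ≠ []) : ∃ c, ColorAtMost L u c x := by
  refine ⟨_, colorAtMost_of_ranking (rank L δ q0 u) (fun y _ _ => even_rank_iff u y) ?_
    x hx hxne⟩
  intro y z hy hyne hflip
  obtain ⟨i, hi, hlt⟩ := exists_weight_wrep_lt hL hy hyne hflip
  refine ⟨i, hi, ?_⟩
  unfold rank
  split_ifs <;> omega

theorem exists_uInv_decomposition (hL : Recognizes δ q0 α L) {w : ℕ → A}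
    (hup : ∃ u v : List A, v ≠ [] ∧ w = upw u v) :
    ∃ u v : List A, v ≠ [] ∧ w = upw u v ∧ UInv L u v := by
  obtain ⟨u, v, hv, rfl⟩ := hup
  obtain ⟨a, p, hp, hcycle⟩ := exists_foldl_wrep_cycle δ v (u.foldl δ q0)
  refine ⟨u ++ wrep v a, wrep v p, wrep_ne_nil hv hp, ?_, simL_of_foldl_eq hL ?_⟩
  · rw [upw, upw, wcat_append, wpow_wrep hv hp, wcat_wrep_wpow]
  · simp only [List.foldl_append, hcycle]

end MullerRanking

end Muller

/-- an ultimately periodic word belongs to `L` iff its natural color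
is even. -/
theorem mem_iff_even_color {A : Type} [Inhabited A] (L : Set (ℕ → A))
    (hreg : OmegaRegular L) (w : ℕ → A)
    (hup : ∃ u v : List A, v ≠ [] ∧ w = upw u v) :
    w ∈ L ↔ Even (icol L w) := by
  obtain ⟨Q, _, q0, δ, α, hL⟩ := hreg
  exact mem_iff_even_icol_of_colored (fun _ _ hx hxne => Muller.exists_colorAtMost hL hx hxne)
    (Muller.exists_uInv_decomposition hL hup)
end

section
/- Normalization of ultimately periodic words in a DFA pair: given a complete DFA Q with m states and a complete DFA P with n states, and words x ∈ Σ*, y ∈ Σ⁺, there exist i with 0 ≤ i ≤ m and j with 1 ≤ j ≤ 2mn such that Q reaches the same state on x·y^i and on x·y^{i+j}, and P reaches the same state on y^j and on y^{2j}. -/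
open scoped Classical

/-- The extended transition function of a complete deterministic automaton. -/
def dstar {A Q : Type} (δ : Q → A → Q) (q : Q) (w : List A) : Q := w.foldl δ q

/-- `v` is `A`-persistent: `v` loops on the initial state, and from every state `q`,
some power of `v` loops on the state reached from `q` by `v`. -/
def APers {A Q : Type} (δ : Q → A → Q) (q0 : Q) (v : List A) : Prop :=
  dstar δ q0 v = q0 ∧
  ∀ q : Q, ∃ i : ℕ, 1 ≤ i ∧ dstar δ (dstar δ q v) (wrep v i) = dstar δ q v

/-!
Reading `y` is a self-map of the state set, so the states reached on `x y^k` (resp. `y^k`)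
enter a cycle after at most `m` (resp. `n`) steps, the preperiod plus the cycle length being
at most the number of states. Take for `i` the preperiod in `Q`, and for `j` the least
multiple of the product of the two cycle lengths that exceeds the preperiod in `P`;
then `j ≤ n + mn ≤ 2mn`.
-/

open Function

theorem dstar_append {A Q : Type} (δ : Q → A → Q) (q : Q) (u v : List A) :
    dstar δ q (u ++ v) = dstar δ (dstar δ q u) v :=
  List.foldl_append

theorem dstar_wrep {A Q : Type} (δ : Q → A → Q) (q : Q) (y : List A) (k : ℕ) :
    dstar δ q (wrep y k) = (fun s => dstar δ s y)^[k] q := by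
  induction k generalizing q with
  | zero => rfl
  | succ k ih =>
    rw [iterate_succ_apply, ← ih, wrep, List.replicate_succ, List.flatten_cons, dstar_append]
    rfl

theorem Function.exists_isPeriodicPt_iterate_add_le_card {α : Type*} [Fintype α]
    (f : α → α) (x : α) :
    ∃ a p, a + p ≤ Fintype.card α ∧ 0 < p ∧ IsPeriodicPt f p (f^[a] x) := by
  obtain ⟨k, l, hkl, heq⟩ := Fintype.exists_ne_map_eq_of_card_lt
    (fun k : Fin (Fintype.card α + 1) => f^[k] x) (by simp)
  wlog hlt : k < l generalizing k l
  · exact this l k hkl.symm heq.symm (lt_of_le_of_ne (not_lt.mp hlt) hkl.symm)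
  have hlt' : (k : ℕ) < l := hlt
  refine ⟨k, l - k, by omega, by omega, ?_⟩
  change f^[l - k] (f^[k] x) = f^[k] x
  rw [← iterate_add_apply, Nat.sub_add_cancel hlt'.le]
  exact heq.symm

theorem Function.IsPeriodicPt.iterate_of_le_of_dvd {α : Type*} {f : α → α} {x : α} {a p t j : ℕ}
    (h : IsPeriodicPt f p (f^[a] x)) (hat : a ≤ t) (hpj : p ∣ j) :
    IsPeriodicPt f j (f^[t] x) := by
  obtain ⟨s, rfl⟩ := Nat.exists_eq_add_of_le hat
  rw [add_comm, iterate_add_apply]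
  exact (h.apply_iterate s).trans_dvd hpj

theorem Nat.exists_dvd_lt_le_add {c : ℕ} (hc : 0 < c) (a : ℕ) :
    ∃ j, c ∣ j ∧ a < j ∧ j ≤ a + c :=
  ⟨c * (a / c + 1), dvd_mul_right _ _, by
    have := Nat.div_add_mod a c
    have := Nat.mod_lt a hc
    rw [Nat.mul_add_one]
    omega⟩

theorem duo_normalization_exists_general {A QQ QP : Type} [Fintype QQ] [Fintype QP]
    (δQ : QQ → A → QQ) (qQ : QQ) (δP : QP → A → QP) (qP : QP)
    (x y : List A) :
    ∃ i j : ℕ, i ≤ Fintype.card QQ ∧ 1 ≤ j ∧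
      j ≤ 2 * Fintype.card QQ * Fintype.card QP ∧
      dstar δQ qQ (x ++ wrep y i) = dstar δQ qQ (x ++ wrep y (i + j)) ∧
      dstar δP qP (wrep y j) = dstar δP qP (wrep y (2 * j)) := by
  set fQ := fun s => dstar δQ s y
  set fP := fun s => dstar δP s y
  obtain ⟨a, p, hap, hp, hQ⟩ := exists_isPeriodicPt_iterate_add_le_card fQ (dstar δQ qQ x)
  obtain ⟨b, r, hbr, hr, hP⟩ := exists_isPeriodicPt_iterate_add_le_card fP qP
  obtain ⟨j, hdvd, hbj, hjle⟩ := Nat.exists_dvd_lt_le_add (Nat.mul_pos hp hr) b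
  have hQj : IsPeriodicPt fQ j (fQ^[a] (dstar δQ qQ x)) :=
    hQ.trans_dvd (dvd_of_mul_right_dvd hdvd)
  have hPj : IsPeriodicPt fP j (fP^[j] qP) :=
    hP.iterate_of_le_of_dvd hbj.le (dvd_of_mul_left_dvd hdvd)
  have hpr : p * r ≤ Fintype.card QQ * Fintype.card QP := Nat.mul_le_mul (by omega) (by omega)
  have hn : Fintype.card QP ≤ Fintype.card QQ * Fintype.card QP :=
    Nat.le_mul_of_pos_left _ (Fintype.card_pos_iff.mpr ⟨qQ⟩)
  refine ⟨a, j, by omega, by omega, by rw [mul_assoc]; omega, ?_, ?_⟩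
  · rw [dstar_append, dstar_append, dstar_wrep, dstar_wrep, add_comm, iterate_add_apply]
    exact hQj.symm
  · rw [dstar_wrep, dstar_wrep, two_mul, iterate_add_apply]
    exact hPj.symm

/-- normalization of ultimately periodic words in a pair of DFAs with
quadratic bounds. -/
theorem duo_normalization_exists {A QQ QP : Type} [Fintype QQ] [Fintype QP]
    (δQ : QQ → A → QQ) (qQ : QQ) (δP : QP → A → QP) (qP : QP)
    (x y : List A) (hy : y ≠ []) :
    ∃ i j : ℕ, i ≤ Fintype.card QQ ∧ 1 ≤ j ∧
      j ≤ 2 * Fintype.card QQ * Fintype.card QP ∧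
      dstar δQ qQ (x ++ wrep y i) = dstar δQ qQ (x ++ wrep y (i + j)) ∧
      dstar δP qP (wrep y j) = dstar δP qP (wrep y (2 * j)) :=
  duo_normalization_exists_general δQ qQ δP qP x y
end
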